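/- In the polynomial ring ℚ[y1,y2,y3,z1,z2,z3], set x1 = y1 − (2/3)s1(y) + (1/3)s1(z), x2 = y2 − (2/3)s1(y) + (1/3)s1(z), x3 = y3 − (2/3)s1(y) + (1/3)s1(z), x4 = z1 + (1/3)s1(y) − (2/3)s1(z), x5 = z2 + (1/3)s1(y) − (2/3)s1(z), x6 = z3 + (1/3)s1(y) − (2/3)s1(z). Then x1 + x2 + x3 + x4 + x5 + x6 = 0, and (x1⁴ + x2⁴ + x3⁴ + x4⁴ + x5⁴ + x6⁴) − (1/4)(x1² + x2² + x3² + x4² + x5² + x6²)² = (s2(y) − s2(z))² − 4(s1(y) − s1(z))(s3(y) − s3(z)). (This is the key computation of Lemma 2.2 identifying the branch divisor of the projection of the Perazzo cubic with the Igusa quartic.) -/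
import Mathlib


open MvPolynomial

namespace Stmt1

noncomputable section

/-- The polynomial ring ℚ[y1,y2,y3,z1,z2,z3]. -/
abbrev R : Type := MvPolynomial (Fin 6) ℚ

def y1 : R := X 0
def y2 : R := X 1
def y3 : R := X 2
def z1 : R := X 3
def z2 : R := X 4
def z3 : R := X 5

/-- Elementary symmetric polynomials of the triple y. -/
def s1y : R := y1 + y2 + y3
def s2y : R := y1*y2 + y1*y3 + y2*y3
def s3y : R := y1*y2*y3

/-- Elementary symmetric polynomials of the triple z. -/
def s1z : R := z1 + z2 + z3
def s2z : R := z1*z2 + z1*z3 + z2*z3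
def s3z : R := z1*z2*z3

def x1 : R := y1 - C (2/3 : ℚ) * s1y + C (1/3 : ℚ) * s1z
def x2 : R := y2 - C (2/3 : ℚ) * s1y + C (1/3 : ℚ) * s1z
def x3 : R := y3 - C (2/3 : ℚ) * s1y + C (1/3 : ℚ) * s1z
def x4 : R := z1 + C (1/3 : ℚ) * s1y - C (2/3 : ℚ) * s1z
def x5 : R := z2 + C (1/3 : ℚ) * s1y - C (2/3 : ℚ) * s1z
def x6 : R := z3 + C (1/3 : ℚ) * s1y - C (2/3 : ℚ) * s1z

end

/-- The key computation of Lemma 2.2: the substitution (2.8) identifies the branch divisor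
of the projection of the Perazzo cubic with the Igusa quartic. -/
theorem igusa_branch_identity :
    x1 + x2 + x3 + x4 + x5 + x6 = 0 ∧
    (x1 ^ 4 + x2 ^ 4 + x3 ^ 4 + x4 ^ 4 + x5 ^ 4 + x6 ^ 4) -
        C (1/4 : ℚ) * (x1 ^ 2 + x2 ^ 2 + x3 ^ 2 + x4 ^ 2 + x5 ^ 2 + x6 ^ 2) ^ 2 =
      (s2y - s2z) ^ 2 - 4 * (s1y - s1z) * (s3y - s3z) := by
  constructor <;>
  · apply MvPolynomial.funext
    intro v
    simp only [x1, x2, x3, x4, x5, x6, s1y, s2y, s3y, s1z, s2z, s3z, y1, y2, y3, z1, z2, z3,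
      map_add, map_sub, map_mul, map_pow, map_ofNat, MvPolynomial.eval_C, MvPolynomial.eval_X,
      map_zero]
    ring

end Stmt1
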